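/- Let μ > 1 and let p be a classical solution of the mean-field dispersion system with mean μ. Define a(t) = μ − p_1(t), v(t) = exp(∫_0^t e^{−t+s}·a(s) ds), and f_0(t) = ∑_{n=0}^∞ p_n(0)·(1 − e^{−t})^n. Then for every t ≥ 0, v(t) = 1 − f_0(t) + f_0(0)·exp(−∫_0^t log v(s) ds) + μ·∫_0^t v(s)^{e^{−t+s}}·e^{−t+s} ds. -/

import Mathlib

/-- The generator of the mean-field dispersion process. -/
noncomputable def dispGen (μ : ℝ) (q : ℕ → ℝ) : ℕ → ℝ
  | 0 => -(μ - q 1) * q 0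
  | 1 => 2 * q 2 - (μ - q 1) * (q 1 - q 0)
  | n + 2 => ((n : ℝ) + 3) * q (n + 3) - ((n : ℝ) + 2) * q (n + 2)
      - (μ - q 1) * (q (n + 2) - q (n + 1))

/-- A classical solution of the mean-field dispersion system with mean `μ`. -/
def IsSol (μ : ℝ) (p : ℝ → ℕ → ℝ) : Prop :=
  (∀ t, 0 ≤ t → ∀ n, 0 ≤ p t n) ∧
  (∀ t, 0 ≤ t → HasSum (fun n => p t n) 1) ∧
  (∀ t, 0 ≤ t → HasSum (fun n : ℕ => (n : ℝ) * p t n) μ) ∧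
  (∀ t, 0 ≤ t → ∀ n, HasDerivWithinAt (fun s => p s n) (dispGen μ (p t) n) (Set.Ici 0) t)

/-- The auxiliary function `v(t) = exp (∫_0^t e^{-t+s} (μ - p_1(s)) ds)`. -/
noncomputable def auxv (μ : ℝ) (p : ℝ → ℕ → ℝ) (t : ℝ) : ℝ :=
  Real.exp (∫ s in (0:ℝ)..t, Real.exp (-t + s) * (μ - p s 1))

/-- `f₀(t) = G(0, 1 - e^{-t})`, the initial generating function evaluated at `1 - e^{-t}`. -/
noncomputable def f0 (p : ℝ → ℕ → ℝ) (t : ℝ) : ℝ :=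
  ∑' n : ℕ, p 0 n * (1 - Real.exp (-t)) ^ n

/-!
Along the characteristic `x(s) = 1 - e^{-t+s}` the generating function
`h(s) = ∑ pₙ(s) x(s)ⁿ` satisfies `h' = -e^{-t+s} (a h + p₁)` with `a = μ - p₁`, while
`w(s) = v(s)^{e^{-t+s}} = exp (e^{-t} ∫₀ˢ eᵘ a)` satisfies `w' = e^{-t+s} a w`. Hence
`((1 - h) w)' = μ e^{-t+s} w`, and integrating over `[0, t]`, where `h(0) = f₀(t)` and
`h(t) = p₀(t)`, gives `μ ∫₀ᵗ v(s)^{e^{-t+s}} e^{-t+s} ds = (1 - p₀(t)) v(t) - (1 - f₀(t))`.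
The remaining term `p₀(t) v(t)` equals `f₀(0) exp (-∫₀ᵗ log v)` because
`p₀(t) = p₀(0) exp (-∫₀ᵗ a)` and `∫₀ᵗ log v = ∫₀ᵗ a - e^{-t} ∫₀ᵗ eᵘ a`.
-/

open Real Set

section Primitive

variable {g : ℝ → ℝ} {a : ℝ}

lemma hasDerivAt_integral_of_continuousOn_Ici (hg : ContinuousOn g (Ici a)) {s : ℝ}
    (hs : a < s) : HasDerivAt (fun y => ∫ u in a..y, g u) (g s) s :=
  intervalIntegral.integral_hasDerivAt_right
    ((hg.mono (uIcc_of_le hs.le ▸ Icc_subset_Ici_self)).intervalIntegrable)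
    ((hg.mono Ioi_subset_Ici_self).stronglyMeasurableAtFilter isOpen_Ioi s hs)
    (hg.continuousAt (Ici_mem_nhds hs))

lemma continuousOn_integral_of_continuousOn_Ici (hg : ContinuousOn g (Ici a)) :
    ContinuousOn (fun y => ∫ u in a..y, g u) (Ici a) := by
  intro b hb
  have hab : a ≤ b + 1 := by linarith [mem_Ici.1 hb]
  have hint : IntervalIntegrable g MeasureTheory.volume a (b + 1) :=
    (hg.mono (uIcc_of_le hab ▸ Icc_subset_Ici_self)).intervalIntegrable
  refine (intervalIntegral.continuousOn_primitive_interval' hint left_mem_uIcc b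
    (by rw [uIcc_of_le hab]; exact ⟨hb, by linarith⟩)).mono_of_mem_nhdsWithin ?_
  rw [uIcc_of_le hab, ← Ici_inter_Iic]
  exact inter_mem_nhdsWithin _ (Iic_mem_nhds (by linarith))

end Primitive

lemma summable_mul_pow_add_nat_mul_pow_sub_one (c : ℝ) {r : ℝ} (hr0 : 0 ≤ r) (hr1 : r < 1) :
    Summable fun n : ℕ => c * r ^ n + n * r ^ (n - 1) := by
  refine ((summable_geometric_of_lt_one hr0 hr1).mul_left _).add ?_
  rw [← summable_nat_add_iff 1]
  simpa [add_mul] using ((summable_pow_mul_geometric_of_norm_lt_one 1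
    (by rwa [Real.norm_of_nonneg hr0])).add (summable_geometric_of_lt_one hr0 hr1))

section Sequence

variable {μ x : ℝ} {q : ℕ → ℝ}

lemma abs_dispGen_le (h0 : ∀ n, 0 ≤ q n) (h1 : ∀ n, q n ≤ 1) (hmean : ∀ n : ℕ, n * q n ≤ μ)
    (n : ℕ) : |dispGen μ q n| ≤ 2 * μ := by
  have hq1 : q 1 ≤ μ := by simpa using hmean 1
  have hμ : 0 ≤ μ := (h0 1).trans hq1
  have key : ∀ X Y d, 0 ≤ X → X ≤ μ → 0 ≤ Y → Y ≤ μ → -1 ≤ d → d ≤ 1 →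
      |X - Y - (μ - q 1) * d| ≤ 2 * μ := by
    intro X Y d hX hX' hY hY' hd hd'
    rw [abs_le]
    constructor <;> nlinarith [h0 1]
  have hnq : ∀ m : ℕ, 0 ≤ (m : ℝ) * q m := fun m => mul_nonneg m.cast_nonneg (h0 m)
  match n with
  | 0 =>
    rw [show dispGen μ q 0 = 0 - 0 - (μ - q 1) * q 0 by simp only [dispGen]; ring]
    exact key _ _ _ le_rfl hμ le_rfl hμ (by linarith [h0 0]) (h1 0)
  | 1 =>
    rw [show dispGen μ q 1 = (2 : ℕ) * q 2 - 0 - (μ - q 1) * (q 1 - q 0) by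
      simp only [dispGen]; push_cast; ring]
    exact key _ _ _ (hnq 2) (hmean 2) le_rfl hμ (by linarith [h0 1, h1 0])
      (by linarith [h0 0, h1 1])
  | n + 2 =>
    rw [show dispGen μ q (n + 2) = ((n + 3 : ℕ) : ℝ) * q (n + 3) - ((n + 2 : ℕ) : ℝ) * q (n + 2)
        - (μ - q 1) * (q (n + 2) - q (n + 1)) by simp only [dispGen]; push_cast; ring]
    exact key _ _ _ (hnq _) (hmean _) (hnq _) (hmean _) (by linarith [h0 (n + 2), h1 (n + 1)])
      (by linarith [h0 (n + 1), h1 (n + 2)])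

noncomputable def genFun (q : ℕ → ℝ) (x : ℝ) : ℝ := ∑' n, q n * x ^ n

lemma genFun_zero (q : ℕ → ℝ) : genFun q 0 = q 0 := by
  rw [genFun, tsum_eq_single 0 fun n hn => by rw [zero_pow hn, mul_zero]]
  simp

lemma summable_mul_pow (hq : Summable q) (hx : |x| ≤ 1) (k : ℕ → ℕ) :
    Summable fun n => q n * x ^ k n :=
  hq.abs.of_norm_bounded fun n => by
    rw [norm_mul, norm_pow, Real.norm_eq_abs, Real.norm_eq_abs]
    exact mul_le_of_le_one_right (abs_nonneg _) (pow_le_one₀ (abs_nonneg x) hx)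

lemma hasSum_genFun (hq : Summable q) (hx : |x| ≤ 1) :
    HasSum (fun n => q n * x ^ n) (genFun q x) :=
  (summable_mul_pow hq hx id).hasSum

-- The summand is the derivative of `qₙ xⁿ` when `q' = dispGen μ q` and `x' = x - 1`.
lemma hasSum_dispGen_mul_pow_add (hq : Summable q) (hmean : Summable fun n : ℕ => (n : ℝ) * q n)
    (hx : |x| ≤ 1) :
    HasSum (fun n : ℕ => dispGen μ q n * x ^ n + q n * (n * x ^ (n - 1) * (x - 1)))
      ((x - 1) * ((μ - q 1) * genFun q x + q 1)) := by
  set f : ℕ → ℝ := fun n => n * q n * x ^ (n - 1)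
  have hf : Summable f := summable_mul_pow hmean hx (· - 1)
  have htel : HasSum (fun n => f (n + 1) - f n) 0 := by
    simpa [f] using ((hasSum_nat_add_iff' 1).2 hf.hasSum).sub hf.hasSum
  set e : ℕ → ℝ := fun n => if n = 0 then 0 else q (n - 1) * x ^ n
  have hG := hasSum_genFun hq hx
  have he : HasSum e (x * genFun q x) := by
    rw [← hasSum_nat_add_iff' 1]
    simpa [e, pow_succ, mul_comm, mul_left_comm] using hG.mul_left x
  have hterm : (fun n : ℕ => dispGen μ q n * x ^ n + q n * (n * x ^ (n - 1) * (x - 1)))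
      = fun n => f (n + 1) - f n - (μ - q 1) * (q n * x ^ n - e n)
          + (if n = 1 then q 1 * x else 0) - (if n = 0 then q 1 else 0) := by
    funext n
    rcases n with _ | _ | n <;> simp [dispGen, f, e] <;> ring
  rw [hterm, show (x - 1) * ((μ - q 1) * genFun q x + q 1)
    = 0 - (μ - q 1) * (genFun q x - x * genFun q x) + q 1 * x - q 1 by ring]
  exact ((htel.sub ((hG.sub he).mul_left (μ - q 1))).add (hasSum_ite_eq 1 (q 1 * x))).sub
    (hasSum_ite_eq 0 (q 1))

end Sequence

lemma one_sub_exp_neg_add_mem_Icc {t y : ℝ} (hy : y ∈ Icc 0 t) :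
    1 - exp (-t + y) ∈ Icc 0 (1 - exp (-t)) := by
  constructor
  · linarith [exp_le_one_iff.2 (by linarith [hy.2] : -t + y ≤ 0)]
  · linarith [exp_le_exp.2 (by linarith [hy.1] : -t ≤ -t + y)]

lemma one_sub_exp_neg_mem_Ico {t : ℝ} (ht : 0 ≤ t) : 1 - exp (-t) ∈ Ico 0 1 :=
  ⟨by linarith [exp_le_one_iff.2 (neg_nonpos.2 ht)], by linarith [exp_pos (-t)]⟩

noncomputable def rateIntegral (μ : ℝ) (p : ℝ → ℕ → ℝ) (y : ℝ) : ℝ :=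
  ∫ u in (0 : ℝ)..y, (μ - p u 1)

noncomputable def expRateIntegral (μ : ℝ) (p : ℝ → ℕ → ℝ) (y : ℝ) : ℝ :=
  ∫ u in (0 : ℝ)..y, exp u * (μ - p u 1)

lemma auxv_eq_exp (μ : ℝ) (p : ℝ → ℕ → ℝ) (s : ℝ) :
    auxv μ p s = exp (exp (-s) * expRateIntegral μ p s) := by
  rw [auxv, expRateIntegral, ← intervalIntegral.integral_const_mul]
  simp only [← mul_assoc, ← exp_add]

lemma auxv_rpow (μ : ℝ) (p : ℝ → ℕ → ℝ) (t s : ℝ) :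
    auxv μ p s ^ exp (-t + s) = exp (exp (-t) * expRateIntegral μ p s) := by
  rw [auxv_eq_exp, ← Real.exp_mul, mul_right_comm, ← exp_add, add_left_comm, neg_add_cancel,
    add_zero]

namespace IsSol

variable {μ t s : ℝ} {p : ℝ → ℕ → ℝ}

lemma nonneg (hp : IsSol μ p) (hs : 0 ≤ s) (n : ℕ) : 0 ≤ p s n := hp.1 s hs n

lemma le_one (hp : IsSol μ p) (hs : 0 ≤ s) (n : ℕ) : p s n ≤ 1 :=
  le_hasSum (hp.2.1 s hs) n fun m _ => hp.nonneg hs m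

lemma nat_mul_le (hp : IsSol μ p) (hs : 0 ≤ s) (n : ℕ) : n * p s n ≤ μ :=
  le_hasSum (hp.2.2.1 s hs) n fun m _ => mul_nonneg m.cast_nonneg (hp.nonneg hs m)

lemma summable (hp : IsSol μ p) (hs : 0 ≤ s) : Summable (p s) := (hp.2.1 s hs).summable

lemma summable_nat_mul (hp : IsSol μ p) (hs : 0 ≤ s) :
    Summable fun n : ℕ => (n : ℝ) * p s n :=
  (hp.2.2.1 s hs).summable

lemma hasDerivAt (hp : IsSol μ p) (hs : 0 < s) (n : ℕ) :
    HasDerivAt (fun y => p y n) (dispGen μ (p s) n) s :=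
  (hp.2.2.2 s hs.le n).hasDerivAt (Ici_mem_nhds hs)

lemma continuousOn (hp : IsSol μ p) (n : ℕ) : ContinuousOn (fun y => p y n) (Ici 0) :=
  fun s hs => (hp.2.2.2 s hs n).continuousWithinAt

lemma abs_dispGen_le (hp : IsSol μ p) (hs : 0 ≤ s) (n : ℕ) : |dispGen μ (p s) n| ≤ 2 * μ :=
  _root_.abs_dispGen_le (hp.nonneg hs) (hp.le_one hs) (hp.nat_mul_le hs) n

lemma continuousOn_genFun_characteristic (hp : IsSol μ p) (ht : 0 ≤ t) :
    ContinuousOn (fun y => genFun (p y) (1 - exp (-t + y))) (Icc 0 t) := by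
  obtain ⟨hr0, hr1⟩ := one_sub_exp_neg_mem_Ico ht
  refine continuousOn_tsum (fun n => ?_) (summable_geometric_of_lt_one hr0 hr1) fun n y hy => ?_
  · exact ((hp.continuousOn n).mono fun y hy => hy.1).mul (by fun_prop)
  · obtain ⟨hx0, hxr⟩ := one_sub_exp_neg_add_mem_Icc hy
    rw [norm_mul, norm_pow, Real.norm_of_nonneg (hp.nonneg hy.1 n), Real.norm_of_nonneg hx0]
    exact (mul_le_of_le_one_left (by positivity) (hp.le_one hy.1 n)).trans
      (pow_le_pow_left₀ hx0 hxr n)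

lemma abs_dispGen_mul_pow_add_le (hp : IsSol μ p) (hs : 0 ≤ s) {x r : ℝ} (hx0 : 0 ≤ x)
    (hxr : x ≤ r) (hr : r ≤ 1) (n : ℕ) :
    |dispGen μ (p s) n * x ^ n + p s n * (n * x ^ (n - 1) * (x - 1))|
      ≤ 2 * μ * r ^ n + n * r ^ (n - 1) := by
  have hx1 : |x - 1| ≤ 1 := by
    rw [abs_sub_comm]; exact abs_sub_le_of_nonneg_of_le zero_le_one le_rfl hx0 (by linarith)
  refine (abs_add_le _ _).trans (add_le_add ?_ ?_)
  · rw [abs_mul, abs_pow, abs_of_nonneg hx0]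
    exact mul_le_mul (hp.abs_dispGen_le hs n) (pow_le_pow_left₀ hx0 hxr n) (by positivity)
      ((abs_nonneg _).trans (hp.abs_dispGen_le hs n))
  · rw [abs_mul, abs_mul, abs_mul, abs_pow, abs_of_nonneg hx0, Nat.abs_cast,
      abs_of_nonneg (hp.nonneg hs n)]
    calc p s n * (n * x ^ (n - 1) * |x - 1|) ≤ 1 * (n * r ^ (n - 1) * 1) := by
          gcongr
          · exact hp.le_one hs n
          · exact mul_nonneg n.cast_nonneg (pow_nonneg (hx0.trans hxr) _)
      _ = n * r ^ (n - 1) := by ring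

lemma hasDerivAt_genFun_characteristic (hp : IsSol μ p) (hs : s ∈ Ioo 0 t) :
    HasDerivAt (fun y => genFun (p y) (1 - exp (-t + y)))
      (-exp (-t + s) * ((μ - p s 1) * genFun (p s) (1 - exp (-t + s)) + p s 1)) s := by
  set X : ℝ → ℝ := fun y => 1 - exp (-t + y)
  set r := 1 - exp (-t)
  have hX : ∀ y, HasDerivAt X (X y - 1) y := fun y =>
    (((hasDerivAt_id y).const_add (-t)).exp.const_sub 1).congr_deriv (by simp [X])
  obtain ⟨hXs0, hXsr⟩ : X s ∈ Icc 0 r := one_sub_exp_neg_add_mem_Icc (Ioo_subset_Icc_self hs)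
  obtain ⟨hr0, hr1⟩ : r ∈ Ico 0 1 := one_sub_exp_neg_mem_Ico (hs.1.trans hs.2).le
  have hXs : |X s| ≤ 1 := abs_le.2 ⟨by linarith, by linarith⟩
  refine (hasDerivAt_tsum_of_isPreconnected (g := fun n y => p y n * X y ^ n)
    (summable_mul_pow_add_nat_mul_pow_sub_one (2 * μ) hr0 hr1) isOpen_Ioo isPreconnected_Ioo
    (fun n y hy => (hp.hasDerivAt hy.1 n).mul ((hX y).pow n))
    (fun n y hy => by
      obtain ⟨hx0, hxr⟩ := one_sub_exp_neg_add_mem_Icc (Ioo_subset_Icc_self hy)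
      exact hp.abs_dispGen_mul_pow_add_le hy.1.le hx0 hxr hr1.le n) hs
    (summable_mul_pow (hp.summable hs.1.le) hXs id)
    hs).congr_deriv ?_
  rw [(hasSum_dispGen_mul_pow_add (hp.summable hs.1.le) (hp.summable_nat_mul hs.1.le)
    hXs).tsum_eq]
  simp only [X]
  ring

lemma continuousOn_rateIntegral (hp : IsSol μ p) :
    ContinuousOn (rateIntegral μ p) (Ici 0) :=
  continuousOn_integral_of_continuousOn_Ici (continuousOn_const.sub (hp.continuousOn 1))

lemma continuousOn_expRateIntegral (hp : IsSol μ p) :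
    ContinuousOn (expRateIntegral μ p) (Ici 0) :=
  continuousOn_integral_of_continuousOn_Ici
    (continuous_exp.continuousOn.mul (continuousOn_const.sub (hp.continuousOn 1)))

lemma hasDerivAt_rateIntegral (hp : IsSol μ p) (hs : 0 < s) :
    HasDerivAt (rateIntegral μ p) (μ - p s 1) s :=
  hasDerivAt_integral_of_continuousOn_Ici (continuousOn_const.sub (hp.continuousOn 1)) hs

lemma hasDerivAt_expRateIntegral (hp : IsSol μ p) (hs : 0 < s) :
    HasDerivAt (expRateIntegral μ p) (exp s * (μ - p s 1)) s :=
  hasDerivAt_integral_of_continuousOn_Ici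
    (continuous_exp.continuousOn.mul (continuousOn_const.sub (hp.continuousOn 1))) hs

lemma p_zero_mul_exp_rateIntegral (hp : IsSol μ p) (ht : 0 ≤ t) :
    p t 0 * exp (rateIntegral μ p t) = p 0 0 := by
  have hderiv : ∀ y ∈ Ioo 0 t, HasDerivAt (fun y => p y 0 * exp (rateIntegral μ p y)) 0 y :=
    fun y hy => ((hp.hasDerivAt hy.1 0).mul (hp.hasDerivAt_rateIntegral hy.1).exp).congr_deriv
      (by simp only [dispGen]; ring)
  have hcont : ContinuousOn (fun y => p y 0 * exp (rateIntegral μ p y)) (Icc 0 t) :=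
    ((hp.continuousOn 0).mul (continuous_exp.comp_continuousOn hp.continuousOn_rateIntegral)).mono
      Icc_subset_Ici_self
  have := intervalIntegral.integral_eq_sub_of_hasDerivAt_of_le ht hcont hderiv
    intervalIntegrable_const
  simpa [rateIntegral, sub_eq_zero] using this.symm

lemma integral_log_auxv (hp : IsSol μ p) (ht : 0 ≤ t) :
    ∫ s in (0 : ℝ)..t, log (auxv μ p s)
      = rateIntegral μ p t - exp (-t) * expRateIntegral μ p t := by
  have hlog : ∀ s, log (auxv μ p s) = exp (-s) * expRateIntegral μ p s := fun s => by
    rw [auxv_eq_exp, log_exp]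
  have hderiv : ∀ y ∈ Ioo 0 t, HasDerivAt
      (fun y => rateIntegral μ p y - exp (-y) * expRateIntegral μ p y) (log (auxv μ p y)) y :=
    fun y hy => ((hp.hasDerivAt_rateIntegral hy.1).sub
      ((hasDerivAt_neg y).exp.mul (hp.hasDerivAt_expRateIntegral hy.1))).congr_deriv (by
        rw [hlog, mul_left_comm, ← mul_assoc, ← exp_add, add_neg_cancel, exp_zero]; ring)
  have hcontJ : ContinuousOn (fun y => exp (-y) * expRateIntegral μ p y) (Icc 0 t) :=
    ((continuous_exp.comp continuous_neg).continuousOn.mul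
      hp.continuousOn_expRateIntegral).mono Icc_subset_Ici_self
  rw [intervalIntegral.integral_eq_sub_of_hasDerivAt_of_le ht
    ((hp.continuousOn_rateIntegral.mono Icc_subset_Ici_self).sub hcontJ) hderiv
    ((hcontJ.congr fun y _ => hlog y).intervalIntegrable_of_Icc ht)]
  simp [rateIntegral, expRateIntegral]

lemma integral_auxv_rpow (hp : IsSol μ p) (ht : 0 ≤ t) :
    μ * ∫ s in (0 : ℝ)..t, auxv μ p s ^ exp (-t + s) * exp (-t + s)
      = (1 - p t 0) * auxv μ p t - (1 - f0 p t) := by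
  set w := fun y => exp (exp (-t) * expRateIntegral μ p y)
  have hw : ContinuousOn w (Icc 0 t) :=
    (continuous_exp.comp_continuousOn (continuousOn_const.mul
      hp.continuousOn_expRateIntegral)).mono Icc_subset_Ici_self
  have hderiv : ∀ y ∈ Ioo 0 t, HasDerivAt
      (fun y => (1 - genFun (p y) (1 - exp (-t + y))) * w y)
      (μ * (auxv μ p y ^ exp (-t + y) * exp (-t + y))) y :=
    fun y hy => (((hp.hasDerivAt_genFun_characteristic hy).const_sub 1).mul
      ((hp.hasDerivAt_expRateIntegral hy.1).const_mul (exp (-t))).exp).congr_deriv (by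
        rw [auxv_rpow, exp_add]; ring)
  have hcont :
      ContinuousOn (fun y => μ * (auxv μ p y ^ exp (-t + y) * exp (-t + y))) (Icc 0 t) := by
    have : ContinuousOn (fun y => μ * (w y * exp (-t + y))) (Icc 0 t) :=
      continuousOn_const.mul (hw.mul (by fun_prop))
    exact this.congr fun y _ => by rw [auxv_rpow]
  have hF : ContinuousOn (fun y => (1 - genFun (p y) (1 - exp (-t + y))) * w y) (Icc 0 t) :=
    (continuousOn_const.sub (hp.continuousOn_genFun_characteristic ht)).mul hw
  rw [← intervalIntegral.integral_const_mul, intervalIntegral.integral_eq_sub_of_hasDerivAt_of_le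
    ht hF hderiv (hcont.intervalIntegrable_of_Icc ht)]
  have hf0 : genFun (p 0) (1 - exp (-t + 0)) = f0 p t := by rw [add_zero]; rfl
  have hw0 : w 0 = 1 := by simp [w, expRateIntegral]
  rw [hf0, hw0, neg_add_cancel, exp_zero, sub_self, genFun_zero, auxv_eq_exp, mul_one]

lemma f0_zero_mul_exp_neg_integral_log_auxv (hp : IsSol μ p) (ht : 0 ≤ t) :
    f0 p 0 * exp (-∫ s in (0 : ℝ)..t, log (auxv μ p s)) = p t 0 * auxv μ p t := by
  have hf0 : f0 p 0 = p 0 0 := by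
    rw [f0, neg_zero, exp_zero, sub_self]; exact genFun_zero (p 0)
  rw [hf0, hp.integral_log_auxv ht, ← hp.p_zero_mul_exp_rateIntegral ht, auxv_eq_exp, neg_sub,
    exp_sub]
  field_simp

end IsSol

theorem volterra_integral_equation_general (μ : ℝ) (p : ℝ → ℕ → ℝ)
    (hp : IsSol μ p) :
    ∀ t : ℝ, 0 ≤ t →
      auxv μ p t = 1 - f0 p t
        + f0 p 0 * Real.exp (-∫ s in (0:ℝ)..t, Real.log (auxv μ p s))
        + μ * ∫ s in (0:ℝ)..t, (auxv μ p s) ^ Real.exp (-t + s) * Real.exp (-t + s) := by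
  intro t ht
  rw [hp.f0_zero_mul_exp_neg_integral_log_auxv ht, hp.integral_auxv_rpow ht]
  ring

theorem volterra_integral_equation (μ : ℝ) (hμ : 1 < μ) (p : ℝ → ℕ → ℝ)
    (hp : IsSol μ p) :
    ∀ t : ℝ, 0 ≤ t →
      auxv μ p t = 1 - f0 p t
        + f0 p 0 * Real.exp (-∫ s in (0:ℝ)..t, Real.log (auxv μ p s))
        + μ * ∫ s in (0:ℝ)..t, (auxv μ p s) ^ Real.exp (-t + s) * Real.exp (-t + s) :=
  volterra_integral_equation_general μ p hp
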